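/- For every smooth vector field v : ℝ³ → ℝ³, there holds pointwise 2 [(curl ε(v))ᵀ]_FF = grad_F((curl v)_F), i.e. 2 Q (curl ε(v))ᵀ Q equals grad_F of the tangential part of curl v. -/

import Mathlib

open Matrix

/-- Partial derivative `∂ f / ∂ xᵢ`. -/
noncomputable def pder (i : Fin 3) (f : (Fin 3 → ℝ) → ℝ) : (Fin 3 → ℝ) → ℝ :=
  fun x => fderiv ℝ f x (Pi.single i 1)

/-- Curl of a vector field on ℝ³. -/
noncomputable def vcurl (v : (Fin 3 → ℝ) → (Fin 3 → ℝ)) : (Fin 3 → ℝ) → (Fin 3 → ℝ) :=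
  fun x => ![pder 1 (fun y => v y 2) x - pder 2 (fun y => v y 1) x,
             pder 2 (fun y => v y 0) x - pder 0 (fun y => v y 2) x,
             pder 0 (fun y => v y 1) x - pder 1 (fun y => v y 0) x]

/-- Divergence of a vector field on ℝ³. -/
noncomputable def vdiv (v : (Fin 3 → ℝ) → (Fin 3 → ℝ)) : (Fin 3 → ℝ) → ℝ :=
  fun x => ∑ i, pder i (fun y => v y i) x

/-- Row-wise curl of a matrix field on ℝ³. -/
noncomputable def mcurl (u : (Fin 3 → ℝ) → Matrix (Fin 3) (Fin 3) ℝ) :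
    (Fin 3 → ℝ) → Matrix (Fin 3) (Fin 3) ℝ :=
  fun x => Matrix.of fun i => vcurl (fun y => u y i) x

/-- Gradient (Jacobian) of a vector field: `(grad v)ᵢⱼ = ∂vᵢ/∂xⱼ`. -/
noncomputable def gradv (v : (Fin 3 → ℝ) → (Fin 3 → ℝ)) :
    (Fin 3 → ℝ) → Matrix (Fin 3) (Fin 3) ℝ :=
  fun x => Matrix.of fun i j => pder j (fun y => v y i) x

/-- `mskw v` is the skew-symmetric matrix associated with `v ∈ ℝ³`. -/
def mskw (v : Fin 3 → ℝ) : Matrix (Fin 3) (Fin 3) ℝ :=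
  !![0, -v 2, v 1; v 2, 0, -v 0; -v 1, v 0, 0]

/-- `vskw M = mskw⁻¹ (skw M)`, the vector associated with the skew part of `M`. -/
noncomputable def vskw (M : Matrix (Fin 3) (Fin 3) ℝ) : Fin 3 → ℝ :=
  ![(M 2 1 - M 1 2) / 2, (M 0 2 - M 2 0) / 2, (M 1 0 - M 0 1) / 2]

/-- `Ξ M = Mᵀ - tr(M)·I`. -/
noncomputable def Xi (M : Matrix (Fin 3) (Fin 3) ℝ) : Matrix (Fin 3) (Fin 3) ℝ :=
  Mᵀ - Matrix.trace M • (1 : Matrix (Fin 3) (Fin 3) ℝ)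

/-- `Ξ⁻¹ M = Mᵀ - ½ tr(M)·I`. -/
noncomputable def XiInv (M : Matrix (Fin 3) (Fin 3) ℝ) : Matrix (Fin 3) (Fin 3) ℝ :=
  Mᵀ - (Matrix.trace M / 2) • (1 : Matrix (Fin 3) (Fin 3) ℝ)

/-- Symmetric part of a matrix. -/
noncomputable def symM (M : Matrix (Fin 3) (Fin 3) ℝ) : Matrix (Fin 3) (Fin 3) ℝ :=
  (1 / 2 : ℝ) • (M + Mᵀ)

/-- Tangential projection `Q = I - n nᵀ`. -/
noncomputable def pQ (n : Fin 3 → ℝ) : Matrix (Fin 3) (Fin 3) ℝ := 1 - vecMulVec n n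

/-- Directional derivative of a scalar field along the vector `t`. -/
noncomputable def dder (t : Fin 3 → ℝ) (f : (Fin 3 → ℝ) → ℝ) : (Fin 3 → ℝ) → ℝ :=
  fun x => fderiv ℝ f x t

/-- Surface gradient of a scalar: `grad_F φ = (∂_{t₁}φ) t₁ + (∂_{t₂}φ) t₂`. -/
noncomputable def gradF (t₁ t₂ : Fin 3 → ℝ) (φ : (Fin 3 → ℝ) → ℝ) (x : Fin 3 → ℝ) :
    Fin 3 → ℝ :=
  dder t₁ φ x • t₁ + dder t₂ φ x • t₂

/-- Surface rot of a scalar: `rot_F φ = (∂_{t₂}φ) t₁ - (∂_{t₁}φ) t₂`. -/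
noncomputable def rotF (t₁ t₂ : Fin 3 → ℝ) (φ : (Fin 3 → ℝ) → ℝ) (x : Fin 3 → ℝ) :
    Fin 3 → ℝ :=
  dder t₂ φ x • t₁ - dder t₁ φ x • t₂

/-- Surface curl of a (tangential) vector field `w = w₁ t₁ + w₂ t₂`:
`curl_F w = ∂_{t₁} w₂ - ∂_{t₂} w₁` where `wᵢ = w ⬝ᵥ tᵢ`. -/
noncomputable def curlF (t₁ t₂ : Fin 3 → ℝ) (w : (Fin 3 → ℝ) → (Fin 3 → ℝ))
    (x : Fin 3 → ℝ) : ℝ :=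
  dder t₁ (fun y => w y ⬝ᵥ t₂) x - dder t₂ (fun y => w y ⬝ᵥ t₁) x

/-- Surface divergence of a (tangential) vector field:
`div_F w = ∂_{t₁} w₁ + ∂_{t₂} w₂`. -/
noncomputable def divF (t₁ t₂ : Fin 3 → ℝ) (w : (Fin 3 → ℝ) → (Fin 3 → ℝ))
    (x : Fin 3 → ℝ) : ℝ :=
  dder t₁ (fun y => w y ⬝ᵥ t₁) x + dder t₂ (fun y => w y ⬝ᵥ t₂) x

/-- Surface gradient of a (tangential) vector field:
`grad_F w = t₁ (grad_F w₁)ᵀ + t₂ (grad_F w₂)ᵀ`. -/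
noncomputable def gradFvec (t₁ t₂ : Fin 3 → ℝ) (w : (Fin 3 → ℝ) → (Fin 3 → ℝ))
    (x : Fin 3 → ℝ) : Matrix (Fin 3) (Fin 3) ℝ :=
  vecMulVec t₁ (gradF t₁ t₂ (fun y => w y ⬝ᵥ t₁) x)
  + vecMulVec t₂ (gradF t₁ t₂ (fun y => w y ⬝ᵥ t₂) x)

/-- Surface rot of a (tangential) row field `q = q₁ t₁ᵀ + q₂ t₂ᵀ`:
`rot_F q = t₁ (rot_F q₁)ᵀ + t₂ (rot_F q₂)ᵀ`. -/
noncomputable def rotFrow (t₁ t₂ : Fin 3 → ℝ) (q : (Fin 3 → ℝ) → (Fin 3 → ℝ))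
    (x : Fin 3 → ℝ) : Matrix (Fin 3) (Fin 3) ℝ :=
  vecMulVec t₁ (rotF t₁ t₂ (fun y => q y ⬝ᵥ t₁) x)
  + vecMulVec t₂ (rotF t₁ t₂ (fun y => q y ⬝ᵥ t₂) x)

/-- Surface curl of a tangential matrix field `u` (e.g. `u = u_FF`), represented as the
row covector `curl_F u = (curl_F (u_{Ft₁})ᵀ) t₁ᵀ + (curl_F (u_{Ft₂})ᵀ) t₂ᵀ`, using
`(u_{Fs})ᵀ = Q uᵀ s`. -/
noncomputable def curlFmat (t₁ t₂ n : Fin 3 → ℝ)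
    (u : (Fin 3 → ℝ) → Matrix (Fin 3) (Fin 3) ℝ) (x : Fin 3 → ℝ) : Fin 3 → ℝ :=
  curlF t₁ t₂ (fun y => (pQ n * (u y)ᵀ) *ᵥ t₁) x • t₁
  + curlF t₁ t₂ (fun y => (pQ n * (u y)ᵀ) *ᵥ t₂) x • t₂

/-- Surface incompatibility of a tangential matrix field:
`inc_F u_FF = curl_F ((curl_F u_FF)ᵀ)`. -/
noncomputable def incF (t₁ t₂ n : Fin 3 → ℝ)
    (u : (Fin 3 → ℝ) → Matrix (Fin 3) (Fin 3) ℝ) (x : Fin 3 → ℝ) : ℝ :=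
  curlF t₁ t₂ (fun y => curlFmat t₁ t₂ n u y) x

/-- Surface trace: `tr_F M = t₁ᵀ M t₁ + t₂ᵀ M t₂`. -/
noncomputable def trF (t₁ t₂ : Fin 3 → ℝ) (M : Matrix (Fin 3) (Fin 3) ℝ) : ℝ :=
  t₁ ⬝ᵥ (M *ᵥ t₁) + t₂ ⬝ᵥ (M *ᵥ t₂)

theorem pder_contDiff' {f : (Fin 3 → ℝ) → ℝ} (hf : ContDiff ℝ (⊤ : ℕ∞) f) (i : Fin 3) :
    ContDiff ℝ (⊤ : ℕ∞) (pder i f) :=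
  (hf.fderiv_right (by simp)).clm_apply contDiff_const

theorem pder_comm' {f : (Fin 3 → ℝ) → ℝ} (hf : ContDiff ℝ (⊤ : ℕ∞) f) (i j : Fin 3) (x : Fin 3 → ℝ) :
    pder i (pder j f) x = pder j (pder i f) x := by
  have hd : Differentiable ℝ (fderiv ℝ f) := (hf.fderiv_right (m := (⊤ : ℕ∞)) (by simp)).differentiable (by simp)
  have h1 : ∀ k l : Fin 3, pder k (pder l f) x
      = (fderiv ℝ (fderiv ℝ f) x (Pi.single k 1)) (Pi.single l 1) := by
    intro k l
    have : pder l f = fun y => (fderiv ℝ f y) (Pi.single l 1) := rfl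
    rw [pder, this, fderiv_clm_apply (hd x) (differentiableAt_const _)]
    simp
  rw [h1, h1]
  exact second_derivative_symmetric (fun y => ((hf.differentiable (by simp)) y).hasFDerivAt)
    ((hd x).hasFDerivAt) _ _

theorem pder_sub' {f g : (Fin 3 → ℝ) → ℝ} (hf : Differentiable ℝ f)
    (hg : Differentiable ℝ g) (i : Fin 3) (x : Fin 3 → ℝ) :
    pder i (fun y => f y - g y) x = pder i f x - pder i g x := by
  simp only [pder]
  rw [fderiv_fun_sub (hf x) (hg x)]
  simp

theorem pder_halfadd' {f g : (Fin 3 → ℝ) → ℝ} (hf : Differentiable ℝ f)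
    (hg : Differentiable ℝ g) (i : Fin 3) (x : Fin 3 → ℝ) :
    pder i (fun y => (1/2 : ℝ) * (f y + g y)) x = (1/2 : ℝ) * (pder i f x + pder i g x) := by
  simp only [pder]
  rw [fderiv_const_mul (a := fun y => f y + g y) ((hf x).add (hg x)), fderiv_fun_add (hf x) (hg x)]
  simp
  ring

theorem pder_lin3' {g0 g1 g2 : (Fin 3 → ℝ) → ℝ} (h0 : Differentiable ℝ g0)
    (h1 : Differentiable ℝ g1) (h2 : Differentiable ℝ g2) (c0 c1 c2 : ℝ)
    (i : Fin 3) (x : Fin 3 → ℝ) :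
    pder i (fun y => c0 * g0 y + c1 * g1 y + c2 * g2 y) x
      = c0 * pder i g0 x + c1 * pder i g1 x + c2 * pder i g2 x := by
  simp only [pder]
  rw [fderiv_fun_add (f := fun y => c0 * g0 y + c1 * g1 y) (((h0 x).const_mul c0).add ((h1 x).const_mul c1)) ((h2 x).const_mul c2),
    fderiv_fun_add ((h0 x).const_mul c0) ((h1 x).const_mul c1),
    fderiv_const_mul (h0 x), fderiv_const_mul (h1 x), fderiv_const_mul (h2 x)]
  simp

theorem dder_eq_sum' {f : (Fin 3 → ℝ) → ℝ} (hf : DifferentiableAt ℝ f x) (t : Fin 3 → ℝ) :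
    dder t f x = ∑ l, t l * pder l f x := by
  simp only [dder, pder]
  have ht : (t : Fin 3 → ℝ) = ∑ l : Fin 3, t l • (Pi.single l (1:ℝ) : Fin 3 → ℝ) := by
    funext j
    simp [Pi.single_apply, Finset.sum_ite_eq']
  conv_lhs => rw [ht]
  rw [map_sum]
  simp [smul_eq_mul]

theorem cross_outer' (u w : Fin 3 → ℝ) (i j : Fin 3) :
    crossProduct u w i * crossProduct u w j
      = (u ⬝ᵥ u * (w ⬝ᵥ w) - (u ⬝ᵥ w)^2) * (if i = j then (1:ℝ) else 0)
        - (w ⬝ᵥ w) * (u i * u j) - (u ⬝ᵥ u) * (w i * w j)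
        + (u ⬝ᵥ w) * (u i * w j + w i * u j) := by
  fin_cases i <;> fin_cases j <;>
    simp [crossProduct, dotProduct, Fin.sum_univ_three] <;> ring

theorem fin3_mk0 (h : 0 < 3) : (⟨0, h⟩ : Fin 3) = 0 := rfl
theorem fin3_mk1 (h : 1 < 3) : (⟨1, h⟩ : Fin 3) = 1 := rfl
theorem fin3_mk2 (h : 2 < 3) : (⟨2, h⟩ : Fin 3) = 2 := rfl

theorem keyA (v : (Fin 3 → ℝ) → (Fin 3 → ℝ)) (hv : ContDiff ℝ (⊤ : ℕ∞) v) (x : Fin 3 → ℝ) :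
    (2:ℝ) • (mcurl (fun y => symM (gradv v y)) x)ᵀ = gradv (vcurl v) x := by
  have hu : ∀ k, ContDiff ℝ (⊤ : ℕ∞) (fun y => v y k) := fun k => contDiff_pi.mp hv k
  have hp1 : ∀ a b : Fin 3, Differentiable ℝ (pder a (fun z => v z b)) :=
    fun a b => (pder_contDiff' (hu b) a).differentiable (by simp)
  have hS : ∀ a b : Fin 3, (fun y => symM (gradv v y) a b)
      = fun y => (1/2:ℝ) * (pder b (fun z => v z a) y + pder a (fun z => v z b) y) := by
    intro a b
    funext y
    simp [symM, gradv, Matrix.smul_apply, Matrix.add_apply, Matrix.transpose_apply,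
      Matrix.of_apply, smul_eq_mul]
  have hpS : ∀ c a b : Fin 3, pder c (fun y => symM (gradv v y) a b) x
      = (1/2:ℝ) * (pder c (pder b (fun z => v z a)) x + pder c (pder a (fun z => v z b)) x) :=
    fun c a b => by rw [hS a b]; exact pder_halfadd' (hp1 b a) (hp1 a b) c x
  have hps : ∀ (c a b d e : Fin 3),
      pder c (fun y => pder a (fun z => v z b) y - pder d (fun z => v z e) y) x
        = pder c (pder a (fun z => v z b)) x - pder c (pder d (fun z => v z e)) x :=
    fun c a b d e => pder_sub' (hp1 a b) (hp1 d e) c x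
  have hcm : ∀ a b k : Fin 3, pder a (pder b (fun z => v z k)) x
      = pder b (pder a (fun z => v z k)) x := fun a b k => pder_comm' (hu k) a b x
  have hgr : ∀ i j : Fin 3, gradv (vcurl v) x i j = pder j (fun y => vcurl v y i) x :=
    fun i j => rfl
  have hmc : ∀ i j : Fin 3, ((2:ℝ) • (mcurl (fun y => symM (gradv v y)) x)ᵀ) i j
      = 2 * vcurl (fun y => symM (gradv v y) j) x i := fun i j => rfl
  ext i j
  rw [hmc, hgr]
  fin_cases i <;> fin_cases j <;>
    simp only [vcurl, fin3_mk0, fin3_mk1, fin3_mk2, Matrix.cons_val_zero, Matrix.cons_val_one,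
      Matrix.head_cons, Matrix.cons_val_two, Matrix.tail_cons, Fin.isValue] <;>
    simp only [hpS, hps] <;>
    linarith [hcm 0 1 0, hcm 0 1 1, hcm 0 1 2, hcm 0 2 0, hcm 0 2 1, hcm 0 2 2,
      hcm 1 2 0, hcm 1 2 1, hcm 1 2 2]

theorem keyQ (t₁ t₂ n : Fin 3 → ℝ) (ht₁ : t₁ ⬝ᵥ t₁ = 1) (ht₂ : t₂ ⬝ᵥ t₂ = 1)
    (ht₁t₂ : t₁ ⬝ᵥ t₂ = 0) (hcross : crossProduct t₁ t₂ = n) :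
    pQ n = vecMulVec t₁ t₁ + vecMulVec t₂ t₂ := by
  ext i j
  have hco := cross_outer' t₁ t₂ i j
  rw [hcross, ht₁, ht₂, ht₁t₂] at hco
  simp only [pQ, Matrix.sub_apply, Matrix.one_apply, Matrix.add_apply, vecMulVec_apply]
  rw [hco]
  split <;> ring

/-- Identity (more2): `2 [(curl ε(v))ᵀ]_FF = grad_F ((curl v)_F)` for every smooth
vector field `v`. -/
theorem two_curl_eps_transpose_FF_eq_gradF_curl_F
    (t₁ t₂ n : Fin 3 → ℝ)
    (ht₁ : t₁ ⬝ᵥ t₁ = 1) (ht₂ : t₂ ⬝ᵥ t₂ = 1) (hn : n ⬝ᵥ n = 1)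
    (ht₁t₂ : t₁ ⬝ᵥ t₂ = 0) (ht₁n : t₁ ⬝ᵥ n = 0) (ht₂n : t₂ ⬝ᵥ n = 0)
    (hcross : crossProduct t₁ t₂ = n)
    (v : (Fin 3 → ℝ) → (Fin 3 → ℝ)) (hv : ContDiff ℝ (⊤ : ℕ∞) v) :
    ∀ x : Fin 3 → ℝ,
      (2 : ℝ) • (pQ n * (mcurl (fun y => symM (gradv v y)) x)ᵀ * pQ n)
        = gradFvec t₁ t₂ (fun y => pQ n *ᵥ vcurl v y) x := by
  intro x
  have hu : ∀ k, ContDiff ℝ (⊤ : ℕ∞) (fun y => v y k) := fun k => contDiff_pi.mp hv k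
  have hg : ∀ m : Fin 3, Differentiable ℝ (fun y => vcurl v y m) := by
    intro m
    have h0 : (fun y => vcurl v y m) = fun y =>
        ![pder 1 (fun z => v z 2) y - pder 2 (fun z => v z 1) y,
          pder 2 (fun z => v z 0) y - pder 0 (fun z => v z 2) y,
          pder 0 (fun z => v z 1) y - pder 1 (fun z => v z 0) y] m := rfl
    rw [h0]
    fin_cases m <;>
      simp only [Matrix.cons_val_zero, Matrix.cons_val_one, Matrix.head_cons,
        Matrix.cons_val_two, Matrix.tail_cons, fin3_mk0, fin3_mk1, fin3_mk2] <;>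
      exact (((pder_contDiff' (hu _) _).sub (pder_contDiff' (hu _) _)).differentiable (by simp))
  have hdot : ∀ c : Fin 3 → ℝ, (fun y => vcurl v y ⬝ᵥ c)
      = fun y => c 0 * vcurl v y 0 + c 1 * vcurl v y 1 + c 2 * vcurl v y 2 := by
    intro c
    funext y
    simp [dotProduct, Fin.sum_univ_three]
    ring
  have hdd : ∀ t c : Fin 3 → ℝ, dder t (fun y => vcurl v y ⬝ᵥ c) x
      = ∑ l, t l * (c 0 * gradv (vcurl v) x 0 l + c 1 * gradv (vcurl v) x 1 l
          + c 2 * gradv (vcurl v) x 2 l) := by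
    intro t c
    rw [hdot]
    rw [dder_eq_sum' (f := fun y => c 0 * vcurl v y 0 + c 1 * vcurl v y 1 + c 2 * vcurl v y 2) (((((hg 0).const_mul (c 0)).add ((hg 1).const_mul (c 1))).add
      ((hg 2).const_mul (c 2))) x) t]
    refine Finset.sum_congr rfl fun l _ => ?_
    rw [pder_lin3' (hg 0) (hg 1) (hg 2)]
    rfl
  have hφ : ∀ t : Fin 3 → ℝ, t ⬝ᵥ n = 0 →
      (fun y => (pQ n *ᵥ vcurl v y) ⬝ᵥ t) = fun y => vcurl v y ⬝ᵥ t := by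
    intro t htn
    simp only [dotProduct, Fin.sum_univ_three] at htn
    funext y
    simp [pQ, mulVec, dotProduct, vecMulVec_apply, Matrix.sub_apply, Matrix.one_apply,
      Fin.sum_univ_three]
    linear_combination (-(n 0 * vcurl v y 0 + n 1 * vcurl v y 1 + n 2 * vcurl v y 2)) * htn
  have hA := keyA v hv x
  have hQ := keyQ t₁ t₂ n ht₁ ht₂ ht₁t₂ hcross
  have step1 : (2 : ℝ) • (pQ n * (mcurl (fun y => symM (gradv v y)) x)ᵀ * pQ n)
      = pQ n * gradv (vcurl v) x * pQ n := by
    rw [← hA, Matrix.mul_smul, Matrix.smul_mul]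
  simp only [gradFvec, gradF]
  rw [hφ t₁ ht₁n, hφ t₂ ht₂n, hdd, hdd, hdd, hdd, step1, hQ]
  ext i j
  simp only [Matrix.mul_apply, Matrix.add_apply, vecMulVec_apply, Pi.add_apply, Pi.smul_apply,
    smul_eq_mul, Fin.sum_univ_three]
  ring
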